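/- arXiv:0911.2568 — 2 statements merged into one kernel-verified Lean document; each statement's English description precedes it below -/
import Mathlib

section
/- Let R be a finite root system with positive system R⁺ and Weyl group W, acting on the group algebra ℤ[Λ] of the weight lattice Λ. With ρ = (1/2)∑_{α∈R⁺} α, the Weyl denominator identity holds: ∑_{w∈W} (−1)^{ℓ(w)} e^{wρ} = e^ρ ∏_{α∈R⁺} (1 − e^{−α}) in ℤ[(1/2)Λ] (equivalently, ∑_{w∈W} (−1)^{ℓ(w)} e^{wρ−ρ} = ∏_{α∈R⁺} (1 − e^{−α}) in ℤ[Λ]). -/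
open Finset

open scoped Classical

namespace WeylDen

lemma sum_invol_neg {A : Type*} (s : Finset A) (τ : A → A) (g : A → ℚ)
    (hmem : ∀ x ∈ s, τ x ∈ s) (hinv : ∀ x ∈ s, τ (τ x) = x)
    (hg : ∀ x ∈ s, g (τ x) = - g x) : ∑ x ∈ s, g x = 0 := by
  have h : ∑ x ∈ s, g (τ x) = ∑ x ∈ s, g x :=
    Finset.sum_nbij' τ τ hmem hmem (fun a ha => hinv a ha) (fun a ha => hinv a ha)
      (fun a _ => rfl)
  have h2 : ∑ x ∈ s, g (τ x) = - ∑ x ∈ s, g x := by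
    rw [← Finset.sum_neg_distrib]
    exact Finset.sum_congr rfl hg
  linarith

lemma sum_pair_int {A : Type*} [DecidableEq A] (g : A → ℚ) (τ : A → A) :
    ∀ N : ℕ, ∀ s : Finset A, s.card ≤ N →
    (∀ x ∈ s, τ x ∈ s) → (∀ x ∈ s, τ (τ x) = x) → (∀ x ∈ s, τ x ≠ x) →
    (∀ x ∈ s, g (τ x) = g x) → (∀ x ∈ s, ∃ n : ℤ, g x = n) →
    ∃ m : ℤ, ∑ x ∈ s, g x = 2 * m := by
  intro N
  induction N with
  | zero =>
    intro s hs _ _ _ _ _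
    rw [Nat.le_zero, Finset.card_eq_zero] at hs
    exact ⟨0, by simp [hs]⟩
  | succ N ih =>
    intro s hcard hmem hinv hfpf hg hint
    rcases s.eq_empty_or_nonempty with rfl | ⟨a, ha⟩
    · exact ⟨0, by simp⟩
    · have hτa : τ a ∈ s := hmem a ha
      have hne : τ a ≠ a := hfpf a ha
      set s' := (s.erase a).erase (τ a) with hs'
      have hmem' : ∀ x ∈ s', x ∈ s := fun x hx =>
        Finset.mem_of_mem_erase (Finset.mem_of_mem_erase hx)
      have hmems' : ∀ x ∈ s', τ x ∈ s' := by
        intro x hx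
        have hxs := hmem' x hx
        have hxτa : x ≠ τ a := (Finset.mem_erase.1 hx).1
        have hxa : x ≠ a := (Finset.mem_erase.1 (Finset.mem_of_mem_erase hx)).1
        rw [hs', Finset.mem_erase, Finset.mem_erase]
        refine ⟨?_, ?_, hmem x hxs⟩
        · intro h
          exact hxa (by rw [← hinv x hxs, h, hinv a ha])
        · intro h
          exact hxτa (by rw [← hinv x hxs, h])
      have hcard' : s'.card ≤ N := by
        have h1 : (s.erase a).card = s.card - 1 := Finset.card_erase_of_mem ha
        have h2 : s'.card = (s.erase a).card - 1 :=
          Finset.card_erase_of_mem (Finset.mem_erase.2 ⟨hne, hτa⟩)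
        have h3 : 1 ≤ s.card := Finset.card_pos.2 ⟨a, ha⟩
        omega
      obtain ⟨m, hm⟩ := ih s' hcard' hmems' (fun x hx => hinv x (hmem' x hx))
        (fun x hx => hfpf x (hmem' x hx)) (fun x hx => hg x (hmem' x hx))
        (fun x hx => hint x (hmem' x hx))
      obtain ⟨n, hn⟩ := hint a ha
      refine ⟨m + n, ?_⟩
      have e1 : g (τ a) + ∑ x ∈ s.erase a |>.erase (τ a), g x = ∑ x ∈ s.erase a, g x :=
        Finset.add_sum_erase _ g (Finset.mem_erase.2 ⟨hne, hτa⟩)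
      have e2 : g a + ∑ x ∈ s.erase a, g x = ∑ x ∈ s, g x :=
        Finset.add_sum_erase _ g ha
      have e3 : g (τ a) = g a := hg a ha
      push_cast
      rw [← e2, ← e1, ← hs', hm, e3, hn]
      ring

variable {Λ : Type*} [AddCommGroup Λ] [Module ℚ Λ]

structure Setup (Λ : Type*) [AddCommGroup Λ] [Module ℚ Λ] where
  R : Finset Λ
  Rplus : Finset Λ
  coroot : Λ → (Λ →ₗ[ℚ] ℚ)
  ρ : Λ
  Wgrp : Subgroup (Λ ≃ₗ[ℚ] Λ)
  hR0 : (0 : Λ) ∉ R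
  hcr2 : ∀ α ∈ R, coroot α α = 2
  hcrys : ∀ α ∈ R, ∀ β ∈ R, ∃ n : ℤ, coroot α β = (n : ℚ)
  hrefl : ∀ α ∈ R, ∀ β ∈ R, β - coroot α β • α ∈ R
  hred : ∀ α ∈ R, ∀ c : ℚ, c • α ∈ R → c = 1 ∨ c = -1
  hposSub : Rplus ⊆ R
  hposU : ∀ α ∈ R, (α ∈ Rplus ↔ -α ∉ Rplus)
  hposAdd : ∀ α ∈ Rplus, ∀ β ∈ Rplus, α + β ∈ R → α + β ∈ Rplus
  hρ : (2 : ℚ) • ρ = ∑ α ∈ Rplus, α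
  hW : Wgrp = Subgroup.closure
      {g : Λ ≃ₗ[ℚ] Λ | ∃ α ∈ R, ∀ v : Λ, g v = v - coroot α v • α}
  hWfin : (Wgrp : Set (Λ ≃ₗ[ℚ] Λ)).Finite

lemma mul_app (f g : Λ ≃ₗ[ℚ] Λ) (v : Λ) : (f * g) v = f (g v) := rfl
lemma one_app (v : Λ) : (1 : Λ ≃ₗ[ℚ] Λ) v = v := rfl
lemma inv_app (f : Λ ≃ₗ[ℚ] Λ) (v : Λ) : f⁻¹ (f v) = v := f.symm_apply_apply v
lemma inv_app' (f : Λ ≃ₗ[ℚ] Λ) (v : Λ) : f (f⁻¹ v) = v := f.apply_symm_apply v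

/-- the exponential basis elements of the group algebra -/
noncomputable def ee (a : Λ) : AddMonoidAlgebra ℤ Λ := AddMonoidAlgebra.single a 1

lemma ee_mul (a b : Λ) : ee a * ee b = ee (a + b) := by
  rw [ee, ee, ee, AddMonoidAlgebra.single_mul_single, one_mul]

lemma ee_zero : ee (0 : Λ) = 1 := (AddMonoidAlgebra.one_def).symm

lemma ee_apply (a b : Λ) : (ee a).coeff b = if a = b then 1 else 0 := by
  rw [ee]; exact Finsupp.single_apply

/-- the action of a linear automorphism on the group algebra -/
noncomputable def Tm (w : Λ ≃ₗ[ℚ] Λ) : AddMonoidAlgebra ℤ Λ →+* AddMonoidAlgebra ℤ Λ :=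
  AddMonoidAlgebra.mapDomainRingHom ℤ (w : Λ →ₗ[ℚ] Λ)

lemma Tm_ee (w : Λ ≃ₗ[ℚ] Λ) (a : Λ) : Tm w (ee a) = ee (w a) := by
  rw [Tm, AddMonoidAlgebra.mapDomainRingHom_apply]
  show AddMonoidAlgebra.mapDomain (⇑(w : Λ →ₗ[ℚ] Λ)) (AddMonoidAlgebra.single a 1) = _
  rw [AddMonoidAlgebra.mapDomain_single]
  rfl

lemma Tm_coeff (w : Λ ≃ₗ[ℚ] Λ) (x : AddMonoidAlgebra ℤ Λ) (a : Λ) :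
    (Tm w x).coeff (w a) = x.coeff a := by
  rw [Tm, AddMonoidAlgebra.mapDomainRingHom_apply]
  show Finsupp.mapDomain (⇑(w : Λ →ₗ[ℚ] Λ)) x.coeff (w a) = _
  exact Finsupp.mapDomain_apply (by exact w.injective) x.coeff a

/-- half of a vector -/
noncomputable def hf (a : Λ) : Λ := (2⁻¹ : ℚ) • a

lemma hf_w (w : Λ ≃ₗ[ℚ] Λ) (a : Λ) : w (hf a) = hf (w a) := by
  rw [hf, hf, map_smul]

lemma hf_neg (a : Λ) : hf (-a) = - hf a := by rw [hf, hf, smul_neg]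

lemma hf_sub (a : Λ) : hf a + -a = - hf a := by
  rw [hf]
  show (2⁻¹ : ℚ) • a + -a = -((2⁻¹ : ℚ) • a)
  module

/-- the factor attached to a root -/
noncomputable def fac (a : Λ) : AddMonoidAlgebra ℤ Λ := ee (hf a) - ee (-(hf a))

lemma fac_neg (a : Λ) : fac (-a) = - fac a := by
  rw [fac, fac, hf_neg, neg_neg]
  abel

lemma Tm_fac (w : Λ ≃ₗ[ℚ] Λ) (a : Λ) : Tm w (fac a) = fac (w a) := by
  rw [fac, map_sub, Tm_ee, Tm_ee, map_neg, hf_w, fac]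

namespace Setup

variable (S : Setup Λ)

/-- the reflection attached to a root -/
noncomputable def rf (α : Λ) : Λ ≃ₗ[ℚ] Λ :=
  if h : S.coroot α α = 2 then
    { toFun := fun v => v - S.coroot α v • α
      invFun := fun v => v - S.coroot α v • α
      map_add' := by
        intro x y
        show x + y - S.coroot α (x+y) • α = (x - S.coroot α x • α) + (y - S.coroot α y • α)
        rw [map_add, add_smul]; abel
      map_smul' := by
        intro c x
        show c • x - S.coroot α (c • x) • α = c • (x - S.coroot α x • α)
        rw [map_smul, smul_sub, smul_smul]; rfl
      left_inv := by
        intro v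
        show (v - S.coroot α v • α) - S.coroot α (v - S.coroot α v • α) • α = v
        rw [map_sub, map_smul, h, smul_eq_mul, sub_smul, mul_smul]
        module
      right_inv := by
        intro v
        show (v - S.coroot α v • α) - S.coroot α (v - S.coroot α v • α) • α = v
        rw [map_sub, map_smul, h, smul_eq_mul, sub_smul, mul_smul]
        module }
  else 1

lemma rf_apply {α : Λ} (h : α ∈ S.R) (v : Λ) :
    S.rf α v = v - S.coroot α v • α := by
  rw [rf, dif_pos (S.hcr2 α h)]; rfl

lemma rf_invol {α : Λ} (h : α ∈ S.R) (v : Λ) : S.rf α (S.rf α v) = v := by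
  simp only [S.rf_apply h, map_sub, map_smul, S.hcr2 α h, smul_eq_mul]
  rw [sub_smul, mul_smul]
  module

lemma rf_mul_self {α : Λ} (h : α ∈ S.R) : S.rf α * S.rf α = 1 :=
  LinearEquiv.ext fun v => S.rf_invol h v

lemma rf_inv {α : Λ} (h : α ∈ S.R) : (S.rf α)⁻¹ = S.rf α := by
  rw [inv_eq_iff_mul_eq_one]; exact S.rf_mul_self h

lemma rf_root {α : Λ} (h : α ∈ S.R) : S.rf α α = -α := by
  rw [S.rf_apply h, S.hcr2 α h]; module

lemma neg_mem_R {α : Λ} (h : α ∈ S.R) : -α ∈ S.R := by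
  have := S.hrefl α h α h
  rwa [S.hcr2 α h, show α - (2:ℚ) • α = -α by module] at this

lemma rf_mem_R {α β : Λ} (hα : α ∈ S.R) (hβ : β ∈ S.R) : S.rf α β ∈ S.R := by
  rw [S.rf_apply hα]; exact S.hrefl α hα β hβ

lemma rf_mem_W {α : Λ} (h : α ∈ S.R) : S.rf α ∈ S.Wgrp := by
  rw [S.hW]
  exact Subgroup.subset_closure ⟨α, h, fun v => S.rf_apply h v⟩

/-- every element of W maps R to R -/
lemma gen_eq_rf {g : Λ ≃ₗ[ℚ] Λ} {α : Λ} (hα : α ∈ S.R)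
    (hg : ∀ v : Λ, g v = v - S.coroot α v • α) : g = S.rf α :=
  LinearEquiv.ext fun v => by rw [hg v, S.rf_apply hα]

/-- the subgroup of transformations preserving R -/
noncomputable def Kgrp : Subgroup (Λ ≃ₗ[ℚ] Λ) where
  carrier := {w | ∀ β ∈ S.R, w β ∈ S.R ∧ w⁻¹ β ∈ S.R}
  one_mem' := fun β hβ => ⟨hβ, hβ⟩
  mul_mem' := by
    intro a b ha hb β hβ
    refine ⟨?_, ?_⟩
    · rw [mul_app]; exact (ha _ ((hb β hβ).1)).1
    · rw [mul_inv_rev, mul_app]; exact (hb _ ((ha β hβ).2)).2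
  inv_mem' := by
    intro a ha β hβ
    rw [inv_inv]
    exact ⟨(ha β hβ).2, (ha β hβ).1⟩

lemma W_le_K : S.Wgrp ≤ S.Kgrp := by
  rw [S.hW, Subgroup.closure_le]
  rintro g ⟨α, hα, hg⟩
  have hgr : g = S.rf α := S.gen_eq_rf hα hg
  intro β hβ
  subst hgr
  rw [S.rf_inv hα]
  exact ⟨S.rf_mem_R hα hβ, S.rf_mem_R hα hβ⟩

/-- every element of W maps R to R -/
lemma w_mem_R {w : Λ ≃ₗ[ℚ] Λ} (hw : w ∈ S.Wgrp) {β : Λ} (hβ : β ∈ S.R) :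
    w β ∈ S.R := ((S.W_le_K hw) β hβ).1

lemma w_inv_mem_R {w : Λ ≃ₗ[ℚ] Λ} (hw : w ∈ S.Wgrp) {β : Λ} (hβ : β ∈ S.R) :
    w⁻¹ β ∈ S.R := ((S.W_le_K hw) β hβ).2

/-- the span of the roots -/
def V : Submodule ℚ Λ := Submodule.span ℚ (S.R : Set Λ)

lemma root_mem_V {α : Λ} (h : α ∈ S.R) : α ∈ S.V := Submodule.subset_span h

instance : FiniteDimensional ℚ S.V := FiniteDimensional.span_finset ℚ S.R

/-- projection onto the span of the roots -/
noncomputable def proj : Λ →ₗ[ℚ] S.V :=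
  Submodule.linearProjOfIsCompl S.V (S.V.exists_isCompl).choose
    (S.V.exists_isCompl).choose_spec

lemma proj_apply {x : Λ} (hx : x ∈ S.V) : S.proj x = ⟨x, hx⟩ :=
  Submodule.linearProjOfIsCompl_apply_left _ ⟨x, hx⟩

noncomputable def bas : Module.Basis (Fin (Module.finrank ℚ S.V)) ℚ S.V :=
  Module.finBasis ℚ S.V

noncomputable def F (i : Fin (Module.finrank ℚ S.V)) : Λ →ₗ[ℚ] ℚ :=
  (S.bas.coord i) ∘ₗ S.proj

/-- auxiliary positive-definite-on-V form -/
noncomputable def Qb : Λ →ₗ[ℚ] Λ →ₗ[ℚ] ℚ :=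
  LinearMap.mk₂ ℚ (fun x y => ∑ i, S.F i x * S.F i y)
    (fun a b y => by simp [map_add, add_mul, Finset.sum_add_distrib])
    (fun c a y => by simp [map_smul, Finset.mul_sum, mul_assoc])
    (fun a b c => by simp [map_add, mul_add, Finset.sum_add_distrib])
    (fun c a y => by
      simp only [map_smul, smul_eq_mul, Finset.mul_sum]
      exact Finset.sum_congr rfl fun i _ => by ring)

lemma Qb_apply (x y : Λ) : S.Qb x y = ∑ i, S.F i x * S.F i y := rfl

lemma Qb_self_nonneg (x : Λ) : 0 ≤ S.Qb x x := by
  rw [Qb_apply]; exact Finset.sum_nonneg fun i _ => mul_self_nonneg _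

lemma Qb_def {x : Λ} (hx : x ∈ S.V) (h : S.Qb x x = 0) : x = 0 := by
  rw [Qb_apply] at h
  have h0 : ∀ i, S.F i x = 0 := by
    intro i
    have := (Finset.sum_eq_zero_iff_of_nonneg
      (fun j _ => mul_self_nonneg (S.F j x))).1 h i (Finset.mem_univ i)
    exact mul_self_eq_zero.1 this
  have hrepr : S.proj x = 0 := by
    have : ∀ i, S.bas.repr (S.proj x) i = S.bas.repr (0 : S.V) i := by
      intro i
      rw [map_zero]
      have := h0 i
      rw [F, LinearMap.comp_apply, Module.Basis.coord_apply] at this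
      simpa using this
    exact Module.Basis.ext_elem S.bas this
  have := S.proj_apply hx
  rw [hrepr] at this
  exact Subtype.ext_iff.1 this.symm

/-- the Weyl group as a finset -/
noncomputable def WF : Finset (Λ ≃ₗ[ℚ] Λ) := S.hWfin.toFinset

lemma mem_WF {w : Λ ≃ₗ[ℚ] Λ} : w ∈ S.WF ↔ w ∈ S.Wgrp := S.hWfin.mem_toFinset

lemma one_mem_WF : 1 ∈ S.WF := S.mem_WF.2 S.Wgrp.one_mem

/-- the invariant bilinear form -/
noncomputable def Bb : Λ →ₗ[ℚ] Λ →ₗ[ℚ] ℚ :=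
  LinearMap.mk₂ ℚ (fun x y => ∑ w ∈ S.WF, S.Qb (w x) (w y))
    (fun a b y => by simp [map_add, Finset.sum_add_distrib])
    (fun c a y => by simp [map_smul, Finset.mul_sum])
    (fun a b c => by simp [map_add, Finset.sum_add_distrib])
    (fun c a y => by simp [map_smul, Finset.mul_sum])

lemma Bb_apply (x y : Λ) : S.Bb x y = ∑ w ∈ S.WF, S.Qb (w x) (w y) := rfl

lemma Bb_symm (x y : Λ) : S.Bb x y = S.Bb y x := by
  rw [Bb_apply, Bb_apply]
  exact Finset.sum_congr rfl fun w _ => by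
    rw [Qb_apply, Qb_apply]
    exact Finset.sum_congr rfl fun i _ => mul_comm _ _

lemma Bb_self_nonneg (x : Λ) : 0 ≤ S.Bb x x := by
  rw [Bb_apply]; exact Finset.sum_nonneg fun w _ => S.Qb_self_nonneg _

lemma Bb_def {x : Λ} (hx : x ∈ S.V) (h : S.Bb x x = 0) : x = 0 := by
  rw [Bb_apply] at h
  have h1 : S.Qb ((1 : Λ ≃ₗ[ℚ] Λ) x) ((1 : Λ ≃ₗ[ℚ] Λ) x) = 0 :=
    (Finset.sum_eq_zero_iff_of_nonneg (fun w _ => S.Qb_self_nonneg _)).1 h 1 S.one_mem_WF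
  rw [one_app] at h1
  exact S.Qb_def hx h1

lemma Bb_inv {w : Λ ≃ₗ[ℚ] Λ} (hw : w ∈ S.Wgrp) (x y : Λ) :
    S.Bb (w x) (w y) = S.Bb x y := by
  rw [Bb_apply, Bb_apply]
  refine Finset.sum_nbij' (fun u => u * w) (fun u => u * w⁻¹) ?_ ?_ ?_ ?_ ?_
  · intro u hu
    exact S.mem_WF.2 (S.Wgrp.mul_mem (S.mem_WF.1 hu) hw)
  · intro u hu
    exact S.mem_WF.2 (S.Wgrp.mul_mem (S.mem_WF.1 hu) (S.Wgrp.inv_mem hw))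
  · intro u _; simp [mul_assoc]
  · intro u _; simp [mul_assoc]
  · intro u _; rfl

lemma Bb_pos_root {α : Λ} (h : α ∈ S.R) : 0 < S.Bb α α := by
  rcases lt_or_eq_of_le (S.Bb_self_nonneg α) with h' | h'
  · exact h'
  · exfalso
    have h0 : α = 0 := S.Bb_def (S.root_mem_V h) h'.symm
    rw [h0] at h
    exact S.hR0 h

/-- the fundamental formula: the coroot is computed by the invariant form -/
lemma coroot_B {γ : Λ} (hγ : γ ∈ S.R) (x : Λ) :
    S.coroot γ x * S.Bb γ γ = 2 * S.Bb x γ := by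
  have h := S.Bb_inv (S.rf_mem_W hγ) x γ
  rw [S.rf_root hγ, S.rf_apply hγ] at h
  simp only [map_sub, map_smul, map_neg, LinearMap.sub_apply, LinearMap.smul_apply,
    LinearMap.neg_apply, smul_eq_mul] at h
  nlinarith [h]

lemma root_ne_zero {α : Λ} (h : α ∈ S.R) : α ≠ 0 := fun h0 => S.hR0 (h0 ▸ h)

lemma coroot_lt_iff {γ : Λ} (hγ : γ ∈ S.R) (x : Λ) :
    S.coroot γ x < 0 ↔ S.Bb x γ < 0 := by
  have h := S.coroot_B hγ x
  have hpos := S.Bb_pos_root hγ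
  constructor <;> intro h' <;> nlinarith

lemma coroot_pos_iff {γ : Λ} (hγ : γ ∈ S.R) (x : Λ) :
    0 < S.coroot γ x ↔ 0 < S.Bb x γ := by
  have h := S.coroot_B hγ x
  have hpos := S.Bb_pos_root hγ
  constructor <;> intro h' <;> nlinarith

lemma coroot_eq_zero_iff {γ : Λ} (hγ : γ ∈ S.R) (x : Λ) :
    S.coroot γ x = 0 ↔ S.Bb x γ = 0 := by
  have h := S.coroot_B hγ x
  have hpos := S.Bb_pos_root hγ
  constructor <;> intro h' <;> nlinarith

lemma coroot_neg_root {γ : Λ} (hγ : γ ∈ S.R) (x : Λ) :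
    S.coroot (-γ) x = - S.coroot γ x := by
  have h1 := S.coroot_B (S.neg_mem_R hγ) x
  have h2 := S.coroot_B hγ x
  simp only [map_neg, LinearMap.neg_apply] at h1
  have hpos := S.Bb_pos_root hγ
  nlinarith

lemma rf_neg_root {γ : Λ} (hγ : γ ∈ S.R) : S.rf (-γ) = S.rf γ := by
  refine LinearEquiv.ext fun v => ?_
  rw [S.rf_apply (S.neg_mem_R hγ), S.rf_apply hγ, S.coroot_neg_root hγ]
  module

lemma coroot_equiv {γ : Λ} (hγ : γ ∈ S.R) {w : Λ ≃ₗ[ℚ] Λ} (hw : w ∈ S.Wgrp) (x : Λ) :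
    S.coroot (w γ) x = S.coroot γ (w⁻¹ x) := by
  have h1 := S.coroot_B (S.w_mem_R hw hγ) x
  have h2 := S.coroot_B hγ (w⁻¹ x)
  have h3 : S.Bb (w γ) (w γ) = S.Bb γ γ := S.Bb_inv hw γ γ
  have h4 : S.Bb x (w γ) = S.Bb (w⁻¹ x) γ := by
    have := S.Bb_inv hw (w⁻¹ x) γ
    rwa [inv_app' w x] at this
  have hpos := S.Bb_pos_root hγ
  rw [h3, h4] at h1
  nlinarith

lemma rf_conj {γ : Λ} (hγ : γ ∈ S.R) {w : Λ ≃ₗ[ℚ] Λ} (hw : w ∈ S.Wgrp) :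
    S.rf (w γ) = w * S.rf γ * w⁻¹ := by
  refine LinearEquiv.ext fun v => ?_
  rw [mul_app, mul_app, S.rf_apply (S.w_mem_R hw hγ), S.coroot_equiv hγ hw,
    S.rf_apply hγ, map_sub, map_smul, inv_app' w v]

lemma indep_of_roots {α β : Λ} (hα : α ∈ S.R) (hβ : β ∈ S.R) (h1 : α ≠ β)
    (h2 : α ≠ -β) {a b : ℚ} (hab : a • α + b • β = 0) : a = 0 ∧ b = 0 := by
  rcases eq_or_ne a 0 with ha | ha
  · refine ⟨ha, ?_⟩
    rw [ha, zero_smul, zero_add] at hab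
    by_contra hb
    exact S.root_ne_zero hβ (by
      have := congrArg (fun v => b⁻¹ • v) hab
      simpa [smul_smul, inv_mul_cancel₀ hb] using this)
  · exfalso
    have hαeq : ((-b/a) : ℚ) • β = α := by
      have := congrArg (fun v => a⁻¹ • v) hab
      simp only [smul_add, smul_smul, inv_mul_cancel₀ ha, one_smul, smul_zero] at this
      have h' : α = -(a⁻¹ * b) • β := by
        rw [neg_smul]
        linear_combination (norm := module) this
      rw [h']
      congr 1
      field_simp
    rcases S.hred β hβ _ (hαeq ▸ hα) with h | h
    · rw [h, one_smul] at hαeq; exact h1 hαeq.symm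
    · rw [h, neg_one_smul] at hαeq; exact h2 hαeq.symm

lemma cs_strict {α β : Λ} (hα : α ∈ S.R) (hβ : β ∈ S.R) (h1 : α ≠ β) (h2 : α ≠ -β) :
    S.Bb α β * S.Bb α β < S.Bb α α * S.Bb β β := by
  set x := S.Bb β β • α - S.Bb α β • β with hx
  have hxne : x ≠ 0 := by
    intro h0
    have : S.Bb β β • α + (- S.Bb α β) • β = 0 := by
      rw [neg_smul]; linear_combination (norm := module) h0
    exact absurd (S.indep_of_roots hα hβ h1 h2 this).1 (ne_of_gt (S.Bb_pos_root hβ))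
  have hxV : x ∈ S.V := by
    exact Submodule.sub_mem _ (Submodule.smul_mem _ _ (S.root_mem_V hα))
      (Submodule.smul_mem _ _ (S.root_mem_V hβ))
  have hxx : 0 < S.Bb x x := by
    rcases lt_or_eq_of_le (S.Bb_self_nonneg x) with h' | h'
    · exact h'
    · exact absurd (S.Bb_def hxV h'.symm) hxne
  rw [hx] at hxx
  simp only [map_sub, map_smul, LinearMap.sub_apply, LinearMap.smul_apply,
    smul_eq_mul] at hxx
  rw [S.Bb_symm β α] at hxx
  nlinarith [hxx, S.Bb_pos_root hβ]

lemma coroot_prod_bound {α β : Λ} (hα : α ∈ S.R) (hβ : β ∈ S.R) (h1 : α ≠ β)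
    (h2 : α ≠ -β) : 0 ≤ S.coroot β α * S.coroot α β ∧
      S.coroot β α * S.coroot α β < 4 := by
  have ha := S.coroot_B hβ α
  have hb := S.coroot_B hα β
  have hcs := S.cs_strict hα hβ h1 h2
  have hpa := S.Bb_pos_root hα
  have hpb := S.Bb_pos_root hβ
  have hs : S.Bb β α = S.Bb α β := S.Bb_symm β α
  rw [hs] at hb
  have key : (S.coroot β α * S.Bb β β) * (S.coroot α β * S.Bb α α)
      = (2 * S.Bb α β) * (2 * S.Bb α β) := by rw [ha, hb]
  constructor
  · nlinarith [key, mul_pos hpa hpb, sq_nonneg (S.Bb α β)]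
  · nlinarith [key, hcs, mul_pos hpa hpb]

/-- P4 : root addition -/
lemma root_add {α β : Λ} (hα : α ∈ S.R) (hβ : β ∈ S.R) (hlt : S.coroot β α < 0)
    (h2 : α ≠ -β) : α + β ∈ S.R := by
  have h1 : α ≠ β := by
    intro h; rw [h] at hlt; rw [S.hcr2 β hβ] at hlt; norm_num at hlt
  have hBneg : S.Bb α β < 0 := (S.coroot_lt_iff hβ α).1 hlt
  have hlt' : S.coroot α β < 0 := by
    rw [S.coroot_lt_iff hα β, S.Bb_symm β α]
    exact hBneg
  obtain ⟨n, hn⟩ := S.hcrys β hβ α hα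
  obtain ⟨m, hm⟩ := S.hcrys α hα β hβ
  have hn1 : n ≤ -1 := by
    rw [hn] at hlt
    have : n < 0 := by exact_mod_cast hlt
    omega
  have hm1 : m ≤ -1 := by
    rw [hm] at hlt'
    have : m < 0 := by exact_mod_cast hlt'
    omega
  have hprod := (S.coroot_prod_bound hα hβ h1 h2).2
  rw [hn, hm] at hprod
  have hnm : n * m ≤ 3 := by
    have : ((n * m : ℤ) : ℚ) < 4 := by push_cast; exact_mod_cast hprod
    have : (n*m : ℤ) < 4 := by exact_mod_cast this
    omega
  have hcase : n = -1 ∨ m = -1 := by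
    by_contra hc
    push_neg at hc
    have : n ≤ -2 := by omega
    have : m ≤ -2 := by omega
    nlinarith
  rcases hcase with h | h
  · have := S.hrefl β hβ α hα
    rw [hn, h] at this
    have heq : α - ((-1 : ℤ) : ℚ) • β = α + β := by push_cast; module
    rwa [heq] at this
  · have := S.hrefl α hα β hβ
    rw [hm, h] at this
    have heq : β - ((-1 : ℤ) : ℚ) • α = α + β := by push_cast; module
    rwa [heq] at this

lemma neg_notin_Rplus {α : Λ} (h : α ∈ S.Rplus) : -α ∉ S.Rplus :=
  (S.hposU α (S.hposSub h)).1 h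

lemma neg_in_Rplus {α : Λ} (hR : α ∈ S.R) (h : α ∉ S.Rplus) : -α ∈ S.Rplus := by
  by_contra h'
  exact h ((S.hposU α hR).2 h')

lemma ne_neg_of_pos {α β : Λ} (hα : α ∈ S.Rplus) (hβ : β ∈ S.Rplus) : α ≠ -β := by
  intro h
  exact S.neg_notin_Rplus hβ (h ▸ hα)

lemma coroot_rf_neg {β : Λ} (hβ : β ∈ S.R) (x : Λ) :
    S.coroot β (S.rf β x) = - S.coroot β x := by
  rw [S.rf_apply hβ, map_sub, map_smul, S.hcr2 β hβ, smul_eq_mul]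
  ring

/-- Claim A : a reflection in a positive root keeps a positive root with negative pairing
positive -/
lemma pos_refl_pos {α β : Λ} (hα : α ∈ S.Rplus) (hβ : β ∈ S.Rplus)
    (hlt : S.coroot β α < 0) : S.rf β α ∈ S.Rplus := by
  have hαR := S.hposSub hα
  have hβR := S.hposSub hβ
  have hne : α ≠ -β := S.ne_neg_of_pos hα hβ
  have h1 : α ≠ β := by
    intro h; rw [h, S.hcr2 β hβR] at hlt; norm_num at hlt
  obtain ⟨n, hn⟩ := S.hcrys β hβR α hαR
  have hn1 : n ≤ -1 := by
    rw [hn] at hlt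
    have : n < 0 := by exact_mod_cast hlt
    omega
  have hn3 : -3 ≤ n := by
    have hBneg : S.Bb α β < 0 := (S.coroot_lt_iff hβR α).1 hlt
    have hlt' : S.coroot α β < 0 := by
      rw [S.coroot_lt_iff hαR β, S.Bb_symm β α]; exact hBneg
    obtain ⟨m, hm⟩ := S.hcrys α hαR β hβR
    have hm1 : m ≤ -1 := by
      rw [hm] at hlt'
      have : m < 0 := by exact_mod_cast hlt'
      omega
    have hprod := (S.coroot_prod_bound hαR hβR h1 hne).2
    rw [hn, hm] at hprod
    have hnm : n * m ≤ 3 := by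
      have : ((n * m : ℤ) : ℚ) < 4 := by push_cast; exact_mod_cast hprod
      have : (n * m : ℤ) < 4 := by exact_mod_cast this
      omega
    nlinarith
  have hs1R : α + β ∈ S.R := S.root_add hαR hβR hlt hne
  have hs1 : α + β ∈ S.Rplus := S.hposAdd α hα β hβ hs1R
  have hrf : S.rf β α = α - (n : ℚ) • β := by rw [S.rf_apply hβR, hn]
  interval_cases n
  · -- n = -3
    have h2ne : α + β ≠ -β := by
      intro h
      have h' : ((-2 : ℚ)) • β = α := by linear_combination (norm := module) - h
      rcases S.hred β hβR _ (h' ▸ hαR) with h'' | h'' <;> norm_num at h''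
    have hc2 : S.coroot β (α + β) < 0 := by
      rw [map_add, hn, S.hcr2 β hβR]; norm_num
    have hs2R : (α + β) + β ∈ S.R := S.root_add hs1R hβR hc2 h2ne
    have hs2 : (α + β) + β ∈ S.Rplus := S.hposAdd _ hs1 β hβ hs2R
    have heq : S.rf β α = ((α + β) + β) + β := by rw [hrf]; push_cast; module
    have hs3R : ((α + β) + β) + β ∈ S.R := heq ▸ S.rf_mem_R hβR hαR
    rw [heq]
    exact S.hposAdd _ hs2 β hβ hs3R
  · -- n = -2
    have heq : S.rf β α = (α + β) + β := by rw [hrf]; push_cast; module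
    have hs2R : (α + β) + β ∈ S.R := heq ▸ S.rf_mem_R hβR hαR
    rw [heq]
    exact S.hposAdd _ hs1 β hβ hs2R
  · -- n = -1
    have heq : S.rf β α = α + β := by rw [hrf]; push_cast; module
    rw [heq]; exact hs1

/-- the set of inversions of a transformation -/
noncomputable def invSet (w : Λ ≃ₗ[ℚ] Λ) : Finset Λ :=
  S.Rplus.filter (fun a => w a ∉ S.Rplus)

/-- reflections: the coroot pairing with ρ is a positive integer;
    moreover the number of inversions of `rf β` is odd -/
lemma rho_pairing {β : Λ} (hβ : β ∈ S.Rplus) :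
    (∃ k : ℤ, S.coroot β S.ρ = (k : ℚ) ∧ 1 ≤ k) ∧ Odd (S.invSet (S.rf β)).card := by
  classical
  have hβR := S.hposSub hβ
  have h2ρ : 2 * S.coroot β S.ρ = ∑ a ∈ S.Rplus, S.coroot β a := by
    rw [← map_sum]
    rw [← S.hρ, map_smul]
    simp [smul_eq_mul]
  set g : Λ → ℚ := fun a => S.coroot β a with hgdef
  set P := S.Rplus.filter (fun a => S.rf β a ∈ S.Rplus) with hP
  set Nf := S.Rplus.filter (fun a => S.rf β a ∉ S.Rplus) with hNf
  have hPN : ∑ a ∈ P, g a + ∑ a ∈ Nf, g a = ∑ a ∈ S.Rplus, g a :=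
    Finset.sum_filter_add_sum_filter_not _ _ _
  -- the sum over P vanishes
  have hPsum : ∑ a ∈ P, g a = 0 := by
    refine sum_invol_neg P (fun a => S.rf β a) g ?_ ?_ ?_
    · intro x hx
      rw [hP, Finset.mem_filter] at hx ⊢
      exact ⟨hx.2, by rw [S.rf_invol hβR]; exact hx.1⟩
    · intro x hx
      exact S.rf_invol hβR x
    · intro x hx
      exact S.coroot_rf_neg hβR x
  -- β belongs to Nf
  have hβNf : β ∈ Nf := by
    rw [hNf, Finset.mem_filter]
    exact ⟨hβ, by rw [S.rf_root hβR]; exact S.neg_notin_Rplus hβ⟩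
  set Nf' := Nf.erase β with hNf'
  -- properties of the involution on Nf'
  have hmm : ∀ x ∈ Nf', -(S.rf β x) ∈ Nf' := by
    intro x hx
    obtain ⟨hxβ, hxN⟩ := Finset.mem_erase.1 hx
    obtain ⟨hxp, hxn⟩ := Finset.mem_filter.1 hxN
    have hxR := S.hposSub hxp
    rw [hNf', Finset.mem_erase, hNf, Finset.mem_filter]
    refine ⟨?_, ?_, ?_⟩
    · intro h
      have : S.rf β x = -β := by rw [← neg_neg (S.rf β x), h]
      have hx2 : x = S.rf β (-β) := by rw [← this, S.rf_invol hβR]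
      rw [map_neg, S.rf_root hβR, neg_neg] at hx2
      exact hxβ hx2
    · exact S.neg_in_Rplus (S.rf_mem_R hβR hxR) hxn
    · rw [map_neg, S.rf_invol hβR]
      intro h
      exact S.neg_notin_Rplus hxp h
  have hii : ∀ x ∈ Nf', -(S.rf β (-(S.rf β x))) = x := by
    intro x hx
    rw [map_neg, S.rf_invol hβR, neg_neg]
  have hff : ∀ x ∈ Nf', -(S.rf β x) ≠ x := by
    intro x hx h
    obtain ⟨hxβ, hxN⟩ := Finset.mem_erase.1 hx
    obtain ⟨hxp, _⟩ := Finset.mem_filter.1 hxN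
    have hxR := S.hposSub hxp
    have h2x : S.rf β x = -x := by rw [← neg_neg (S.rf β x), h]
    rw [S.rf_apply hβR] at h2x
    have hxe : (S.coroot β x / 2) • β = x := by
      have h3 : (2 : ℚ) • x = S.coroot β x • β := by
        linear_combination (norm := module) h2x
      calc (S.coroot β x / 2) • β = (2⁻¹ : ℚ) • (S.coroot β x • β) := by
            rw [smul_smul]; ring_nf
        _ = (2⁻¹ : ℚ) • ((2 : ℚ) • x) := by rw [← h3]
        _ = x := by rw [smul_smul]; norm_num
    rcases S.hred β hβR _ (hxe ▸ hxR) with h' | h'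
    · rw [h', one_smul] at hxe
      exact hxβ hxe.symm
    · rw [h', neg_one_smul] at hxe
      exact S.ne_neg_of_pos hxp hβ hxe.symm
  have hNint : ∀ x ∈ Nf', ∃ n : ℤ, g x = n := fun x hx =>
    S.hcrys β hβR x (S.hposSub (Finset.mem_filter.1 (Finset.mem_of_mem_erase hx)).1)
  have hNg : ∀ x ∈ Nf', g (-(S.rf β x)) = g x := by
    intro x hx
    show S.coroot β _ = _
    rw [map_neg, S.coroot_rf_neg hβR, neg_neg]
  obtain ⟨m, hm⟩ := sum_pair_int g (fun x => -(S.rf β x)) Nf'.card Nf' le_rfl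
    hmm hii hff hNg hNint
  have hNpos : ∀ x ∈ Nf, 0 ≤ g x := by
    intro x hx
    obtain ⟨hxp, hxn⟩ := Finset.mem_filter.1 hx
    by_contra hneg
    push_neg at hneg
    exact hxn (S.pos_refl_pos hxp hβ hneg)
  have hm0 : 0 ≤ m := by
    have h5 : 0 ≤ ∑ x ∈ Nf', g x :=
      Finset.sum_nonneg (fun x hx => hNpos x (Finset.mem_of_mem_erase hx))
    rw [hm] at h5
    have : (0 : ℚ) ≤ (m : ℚ) := by linarith
    exact_mod_cast this
  have hsplit : ∑ a ∈ Nf, g a = g β + ∑ a ∈ Nf', g a := (Finset.add_sum_erase _ g hβNf).symm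
  have hgβ : g β = 2 := S.hcr2 β hβR
  constructor
  · refine ⟨1 + m, ?_, by omega⟩
    have h4 : ∑ a ∈ S.Rplus, g a = 2 + 2 * (m : ℚ) := by
      rw [← hPN, hPsum, hsplit, hgβ, hm]; ring
    rw [h4] at h2ρ
    push_cast
    linarith
  · obtain ⟨m', hm'⟩ := sum_pair_int (fun _ => (1 : ℚ)) (fun x => -(S.rf β x)) Nf'.card Nf'
      le_rfl hmm hii hff (fun _ _ => rfl) (fun _ _ => ⟨1, by norm_num⟩)
    have hc : (Nf'.card : ℚ) = 2 * (m' : ℚ) := by simpa using hm'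
    have hcz : (Nf'.card : ℤ) = 2 * m' := by exact_mod_cast hc
    have hcard : Nf.card = Nf'.card + 1 := by
      rw [hNf', Finset.card_erase_of_mem hβNf]
      have : 1 ≤ Nf.card := Finset.card_pos.2 ⟨β, hβNf⟩
      omega
    have hiq : S.invSet (S.rf β) = Nf := rfl
    rw [hiq, Nat.odd_iff]
    omega

lemma coroot_rho_int {β : Λ} (hβ : β ∈ S.Rplus) :
    ∃ k : ℤ, S.coroot β S.ρ = (k : ℚ) ∧ 1 ≤ k := (S.rho_pairing hβ).1

lemma rho_pos {β : Λ} (hβ : β ∈ S.Rplus) : 0 < S.Bb β S.ρ := by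
  obtain ⟨k, hk, hk1⟩ := S.coroot_rho_int hβ
  have h := S.coroot_B (S.hposSub hβ) S.ρ
  rw [S.Bb_symm S.ρ β] at h
  have hpos := S.Bb_pos_root (S.hposSub hβ)
  have : (1 : ℚ) ≤ (k : ℚ) := by exact_mod_cast hk1
  nlinarith

lemma rho_pos' {β : Λ} (hβ : β ∈ S.Rplus) : 0 < S.Bb S.ρ β := by
  rw [S.Bb_symm]; exact S.rho_pos hβ

/-- a nonempty sum of distinct positive roots is nonzero -/
lemma sum_pos_ne_zero {T : Finset Λ} (hT : T ⊆ S.Rplus) (hne : T.Nonempty) :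
    ∑ a ∈ T, a ≠ 0 := by
  intro h0
  have hs : S.Bb (∑ a ∈ T, a) S.ρ = 0 := by rw [h0]; simp
  rw [map_sum, LinearMap.sum_apply] at hs
  have hpos : 0 < ∑ a ∈ T, S.Bb a S.ρ := by
    obtain ⟨a, ha⟩ := hne
    refine Finset.sum_pos' (fun x hx => le_of_lt (S.rho_pos (hT hx))) ⟨a, ha, S.rho_pos (hT ha)⟩
  rw [hs] at hpos
  exact lt_irrefl _ hpos

/-- the simple roots -/
noncomputable def Δ : Finset Λ :=
  S.Rplus.filter (fun γ => ¬ ∃ a ∈ S.Rplus, ∃ b ∈ S.Rplus, γ = a + b)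

lemma simple_mem_Rplus {γ : Λ} (h : γ ∈ S.Δ) : γ ∈ S.Rplus := (Finset.mem_filter.1 h).1

lemma simple_mem_R {γ : Λ} (h : γ ∈ S.Δ) : γ ∈ S.R := S.hposSub (S.simple_mem_Rplus h)

lemma simple_not_sum {γ : Λ} (h : γ ∈ S.Δ) :
    ¬ ∃ a ∈ S.Rplus, ∃ b ∈ S.Rplus, γ = a + b := (Finset.mem_filter.1 h).2

/-- the measure used for induction on positive roots -/
noncomputable def meas (β : Λ) : ℕ :=
  (S.Rplus.filter (fun b => S.Bb b S.ρ < S.Bb β S.ρ)).card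

lemma meas_lt {a β : Λ} (ha : a ∈ S.Rplus) (hlt : S.Bb a S.ρ < S.Bb β S.ρ) :
    S.meas a < S.meas β := by
  apply Finset.card_lt_card
  constructor
  · intro x hx
    obtain ⟨hx1, hx2⟩ := Finset.mem_filter.1 hx
    exact Finset.mem_filter.2 ⟨hx1, lt_trans hx2 hlt⟩
  · intro hsub
    have : a ∈ S.Rplus.filter (fun b => S.Bb b S.ρ < S.Bb a S.ρ) :=
      hsub (Finset.mem_filter.2 ⟨ha, hlt⟩)
    exact lt_irrefl _ (Finset.mem_filter.1 this).2

/-- every positive root is an ℕ-combination of simple roots -/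
lemma simple_decomp : ∀ (n : ℕ), ∀ β ∈ S.Rplus, S.meas β ≤ n →
    ∃ c : Λ → ℕ, β = ∑ γ ∈ S.Δ, (c γ : ℚ) • γ := by
  intro n
  induction n using Nat.strong_induction_on with
  | _ n ih =>
    intro β hβ hm
    by_cases hs : β ∈ S.Δ
    · refine ⟨fun t => if t = β then 1 else 0, ?_⟩
      have hterm : ∀ γ ∈ S.Δ, (((if γ = β then (1 : ℕ) else 0) : ℕ) : ℚ) • γ
          = if γ = β then γ else 0 := by
        intro γ _; split <;> simp
      rw [Finset.sum_congr rfl hterm, Finset.sum_ite_eq' S.Δ β (fun γ => γ), if_pos hs]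
    · have : ∃ a ∈ S.Rplus, ∃ b ∈ S.Rplus, β = a + b := by
        by_contra hc
        exact hs (Finset.mem_filter.2 ⟨hβ, hc⟩)
      obtain ⟨a, ha, b, hb, hab⟩ := this
      have hBa : 0 < S.Bb a S.ρ := S.rho_pos ha
      have hBb : 0 < S.Bb b S.ρ := S.rho_pos hb
      have hsum : S.Bb β S.ρ = S.Bb a S.ρ + S.Bb b S.ρ := by
        rw [hab, map_add, LinearMap.add_apply]
      have hma : S.meas a < S.meas β := S.meas_lt ha (by linarith)
      have hmb : S.meas b < S.meas β := S.meas_lt hb (by linarith)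
      obtain ⟨ca, hca⟩ := ih (S.meas a) (lt_of_lt_of_le hma hm) a ha le_rfl
      obtain ⟨cb, hcb⟩ := ih (S.meas b) (lt_of_lt_of_le hmb hm) b hb le_rfl
      refine ⟨fun t => ca t + cb t, ?_⟩
      rw [hab, hca, hcb, ← Finset.sum_add_distrib]
      refine Finset.sum_congr rfl fun t _ => ?_
      push_cast
      rw [add_smul]

lemma simple_decomp' {β : Λ} (hβ : β ∈ S.Rplus) :
    ∃ c : Λ → ℕ, β = ∑ γ ∈ S.Δ, (c γ : ℚ) • γ :=
  S.simple_decomp (S.meas β) β hβ le_rfl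

lemma simple_pairwise {γ δ : Λ} (hγ : γ ∈ S.Δ) (hδ : δ ∈ S.Δ) (hne : γ ≠ δ) :
    S.Bb γ δ ≤ 0 := by
  by_contra hpos
  push_neg at hpos
  have hγR := S.simple_mem_R hγ
  have hδR := S.simple_mem_R hδ
  have hc : 0 < S.coroot δ γ := (S.coroot_pos_iff hδR γ).2 hpos
  have hcneg : S.coroot (-δ) γ < 0 := by rw [S.coroot_neg_root hδR]; linarith
  have hne2 : γ ≠ -(-δ) := by rw [neg_neg]; exact hne
  have hmem : γ + -δ ∈ S.R := S.root_add hγR (S.neg_mem_R hδR) hcneg hne2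
  rcases Classical.em (γ + -δ ∈ S.Rplus) with h | h
  · refine S.simple_not_sum hγ ⟨γ + -δ, h, δ, S.simple_mem_Rplus hδ, ?_⟩
    module
  · have h2 : -(γ + -δ) ∈ S.Rplus := S.neg_in_Rplus hmem h
    refine S.simple_not_sum hδ ⟨-(γ + -δ), h2, γ, S.simple_mem_Rplus hγ, ?_⟩
    module

lemma simple_indep (c : Λ → ℚ) (h : ∑ γ ∈ S.Δ, c γ • γ = 0) : ∀ γ ∈ S.Δ, c γ = 0 := by
  classical
  set P := S.Δ.filter (fun γ => 0 ≤ c γ) with hP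
  set Ng := S.Δ.filter (fun γ => ¬ 0 ≤ c γ) with hNg
  have hsplit : ∑ γ ∈ P, c γ • γ + ∑ γ ∈ Ng, c γ • γ = 0 := by
    rw [Finset.sum_filter_add_sum_filter_not]; exact h
  set x := ∑ γ ∈ P, c γ • γ with hx
  have hx2 : x = ∑ γ ∈ Ng, (- c γ) • γ := by
    rw [hx]
    have : ∑ γ ∈ Ng, (- c γ) • γ = - ∑ γ ∈ Ng, c γ • γ := by
      rw [← Finset.sum_neg_distrib]
      exact Finset.sum_congr rfl fun t _ => by rw [neg_smul]
    rw [this]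
    linear_combination (norm := module) hsplit
  have hxV : x ∈ S.V := by
    rw [hx]
    exact Submodule.sum_mem _ fun γ hγ =>
      Submodule.smul_mem _ _ (S.root_mem_V (S.simple_mem_R (Finset.mem_filter.1 hγ).1))
  have hBxx : S.Bb x x ≤ 0 := by
    nth_rewrite 1 [hx]
    rw [hx2, map_sum]
    refine Finset.sum_nonpos fun δ hδ => ?_
    rw [map_smul, smul_eq_mul]
    have hcδ : ¬ 0 ≤ c δ := (Finset.mem_filter.1 hδ).2
    push_neg at hcδ
    refine mul_nonpos_of_nonneg_of_nonpos (by linarith) ?_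
    rw [map_sum, LinearMap.sum_apply]
    refine Finset.sum_nonpos fun γ hγ => ?_
    rw [map_smul, LinearMap.smul_apply, smul_eq_mul]
    have hγδ : γ ≠ δ := by
      intro hh
      exact (not_le.mpr hcδ) (hh ▸ (Finset.mem_filter.1 hγ).2)
    have hB := S.simple_pairwise (Finset.mem_filter.1 hγ).1 (Finset.mem_filter.1 hδ).1 hγδ
    exact mul_nonpos_of_nonneg_of_nonpos (Finset.mem_filter.1 hγ).2 hB
  have hx0 : x = 0 := S.Bb_def hxV (le_antisymm hBxx (S.Bb_self_nonneg x))
  -- from x = 0 conclude each coefficient vanishes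
  have hxρP : ∑ γ ∈ P, c γ * S.Bb γ S.ρ = 0 := by
    have := congrArg (fun v => S.Bb v S.ρ) hx0
    simp only [hx, map_sum, map_smul, LinearMap.sum_apply, LinearMap.smul_apply,
      smul_eq_mul, map_zero, LinearMap.zero_apply] at this
    exact this
  have hxρN : ∑ γ ∈ Ng, (- c γ) * S.Bb γ S.ρ = 0 := by
    have := congrArg (fun v => S.Bb v S.ρ) (hx2 ▸ hx0 : ∑ γ ∈ Ng, (- c γ) • γ = 0)
    simp only [map_sum, map_smul, LinearMap.sum_apply, LinearMap.smul_apply,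
      smul_eq_mul, map_zero, LinearMap.zero_apply] at this
    exact this
  intro γ hγ
  by_cases hcγ : 0 ≤ c γ
  · have hγP : γ ∈ P := Finset.mem_filter.2 ⟨hγ, hcγ⟩
    have := (Finset.sum_eq_zero_iff_of_nonneg (fun δ hδ => mul_nonneg
      (Finset.mem_filter.1 hδ).2 (le_of_lt (S.rho_pos (S.simple_mem_Rplus
        (Finset.mem_filter.1 hδ).1))))).1 hxρP γ hγP
    have hρ := S.rho_pos (S.simple_mem_Rplus hγ)
    rcases mul_eq_zero.1 this with h' | h'
    · exact h'
    · exact absurd h' (ne_of_gt hρ)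
  · exfalso
    have hγN : γ ∈ Ng := Finset.mem_filter.2 ⟨hγ, hcγ⟩
    push_neg at hcγ
    have := (Finset.sum_eq_zero_iff_of_nonneg (fun δ hδ => mul_nonneg
      (by
        have : ¬ 0 ≤ c δ := (Finset.mem_filter.1 hδ).2
        push_neg at this
        linarith) (le_of_lt (S.rho_pos (S.simple_mem_Rplus
        (Finset.mem_filter.1 hδ).1))))).1 hxρN γ hγN
    have hρ := S.rho_pos (S.simple_mem_Rplus hγ)
    rcases mul_eq_zero.1 this with h' | h'
    · linarith
    · exact absurd h' (ne_of_gt hρ)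

/-- K1 : a simple reflection permutes the other positive roots -/
lemma simple_refl_pos {γ β : Λ} (hγ : γ ∈ S.Δ) (hβ : β ∈ S.Rplus) (hne : β ≠ γ) :
    S.rf γ β ∈ S.Rplus := by
  classical
  have hγR := S.simple_mem_R hγ
  have hβR := S.hposSub hβ
  obtain ⟨c, hc⟩ := S.simple_decomp' hβ
  have hex : ∃ δ ∈ S.Δ, δ ≠ γ ∧ c δ ≠ 0 := by
    by_contra hall
    push_neg at hall
    have hβeq : β = ((c γ : ℚ)) • γ := by
      rw [hc]
      exact Finset.sum_eq_single_of_mem γ hγ (fun t ht htne => by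
        rw [hall t ht htne]; simp)
    rcases S.hred γ hγR _ (hβeq ▸ hβR) with h' | h'
    · rw [h', one_smul] at hβeq; exact hne hβeq
    · have : (0:ℚ) ≤ (c γ : ℚ) := by positivity
      rw [h'] at this; norm_num at this
  obtain ⟨δ₀, hδ₀, hδ₀ne, hc₀⟩ := hex
  by_contra hout
  have hrfR : S.rf γ β ∈ S.R := S.rf_mem_R hγR hβR
  have hneg : -(S.rf γ β) ∈ S.Rplus := S.neg_in_Rplus hrfR hout
  obtain ⟨d, hd⟩ := S.simple_decomp' hneg
  set q : Λ → ℚ := fun t => (c t : ℚ) + (d t : ℚ) - (if t = γ then S.coroot γ β else 0)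
    with hq
  have hqsum : ∑ t ∈ S.Δ, q t • t = 0 := by
    have h1 : ∑ t ∈ S.Δ, (if t = γ then S.coroot γ β else 0) • t
        = S.coroot γ β • γ := by
      have hterm : ∀ t ∈ S.Δ, (if t = γ then S.coroot γ β else 0) • t
          = if t = γ then S.coroot γ β • t else 0 := by
        intro t _; split <;> simp
      rw [Finset.sum_congr rfl hterm,
        Finset.sum_ite_eq' S.Δ γ (fun t => S.coroot γ β • t), if_pos hγ]
    have h2 : ∑ t ∈ S.Δ, q t • t
        = (∑ t ∈ S.Δ, (c t : ℚ) • t) + (∑ t ∈ S.Δ, (d t : ℚ) • t)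
          - S.coroot γ β • γ := by
      rw [← h1, ← Finset.sum_add_distrib, ← Finset.sum_sub_distrib]
      refine Finset.sum_congr rfl fun t _ => ?_
      rw [hq]
      rw [sub_smul, add_smul]
    rw [h2, ← hc, ← hd]
    have h3 : S.rf γ β = β - S.coroot γ β • γ := S.rf_apply hγR β
    linear_combination (norm := module) - h3
  have := S.simple_indep q hqsum δ₀ hδ₀
  rw [hq] at this
  simp only [if_neg hδ₀ne] at this
  have hc0 : (0:ℚ) ≤ (c δ₀ : ℚ) := by positivity
  have hd0 : (0:ℚ) ≤ (d δ₀ : ℚ) := by positivity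
  have : (c δ₀ : ℚ) = 0 := by linarith
  exact hc₀ (by exact_mod_cast this)

/-- the set of simple reflections -/
def SRef : Set (Λ ≃ₗ[ℚ] Λ) := {g | ∃ γ ∈ S.Δ, g = S.rf γ}

lemma exists_simple_pos {β : Λ} (hβ : β ∈ S.Rplus) (hnot : β ∉ S.Δ) :
    ∃ γ ∈ S.Δ, 0 < S.Bb β γ := by
  by_contra hall
  push_neg at hall
  obtain ⟨c, hc⟩ := S.simple_decomp' hβ
  have hpos : 0 < S.Bb β β := S.Bb_pos_root (S.hposSub hβ)
  have : S.Bb β β ≤ 0 := by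
    nth_rewrite 2 [hc]
    rw [map_sum]
    refine Finset.sum_nonpos fun γ hγ => ?_
    rw [map_smul, smul_eq_mul]
    exact mul_nonpos_of_nonneg_of_nonpos (by positivity) (hall γ hγ)
  linarith

lemma rf_mem_closure_simples_pos : ∀ (n : ℕ), ∀ β ∈ S.Rplus, S.meas β ≤ n →
    S.rf β ∈ Subgroup.closure S.SRef := by
  intro n
  induction n using Nat.strong_induction_on with
  | _ n ih =>
    intro β hβ hm
    by_cases hs : β ∈ S.Δ
    · exact Subgroup.subset_closure ⟨β, hs, rfl⟩
    · obtain ⟨γ, hγ, hBpos⟩ := S.exists_simple_pos hβ hs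
      have hγR := S.simple_mem_R hγ
      have hβR := S.hposSub hβ
      have hne : β ≠ γ := fun h => hs (h ▸ hγ)
      have hk : 0 < S.coroot γ β := (S.coroot_pos_iff hγR β).2 hBpos
      set β' := S.rf γ β with hβ'
      have hβ'pos : β' ∈ S.Rplus := S.simple_refl_pos hγ hβ hne
      have hβ'lt : S.Bb β' S.ρ < S.Bb β S.ρ := by
        rw [hβ', S.rf_apply hγR]
        rw [map_sub, LinearMap.sub_apply, map_smul, LinearMap.smul_apply, smul_eq_mul]
        have := S.rho_pos (S.simple_mem_Rplus hγ)
        nlinarith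
      have hmlt : S.meas β' < S.meas β := S.meas_lt hβ'pos hβ'lt
      have hβeq : β = S.rf γ β' := by rw [hβ', S.rf_invol hγR]
      have hconj : S.rf β = S.rf γ * S.rf β' * (S.rf γ)⁻¹ := by
        nth_rewrite 1 [hβeq]
        exact S.rf_conj (S.hposSub hβ'pos) (S.rf_mem_W hγR)
      rw [hconj]
      have h1 : S.rf γ ∈ Subgroup.closure S.SRef := Subgroup.subset_closure ⟨γ, hγ, rfl⟩
      have h2 : S.rf β' ∈ Subgroup.closure S.SRef :=
        ih (S.meas β') (lt_of_lt_of_le hmlt hm) β' hβ'pos le_rfl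
      exact Subgroup.mul_mem _ (Subgroup.mul_mem _ h1 h2) (Subgroup.inv_mem _ h1)

lemma rf_mem_closure_simples {β : Λ} (hβ : β ∈ S.R) :
    S.rf β ∈ Subgroup.closure S.SRef := by
  by_cases h : β ∈ S.Rplus
  · exact S.rf_mem_closure_simples_pos (S.meas β) β h le_rfl
  · have hneg : -β ∈ S.Rplus := S.neg_in_Rplus hβ h
    have : S.rf β = S.rf (-(-β)) := by rw [neg_neg]
    rw [this, S.rf_neg_root (S.hposSub hneg)]
    exact S.rf_mem_closure_simples_pos (S.meas (-β)) (-β) hneg le_rfl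

lemma Wgrp_eq_closure_simples : S.Wgrp = Subgroup.closure S.SRef := by
  refine le_antisymm ?_ ?_
  · rw [S.hW, Subgroup.closure_le]
    rintro g ⟨α, hα, hg⟩
    have : g = S.rf α := S.gen_eq_rf hα hg
    rw [SetLike.mem_coe, this]
    exact S.rf_mem_closure_simples hα
  · rw [Subgroup.closure_le]
    rintro g ⟨γ, hγ, rfl⟩
    exact S.rf_mem_W (S.simple_mem_R hγ)

lemma list_prod_mem_W {l : List (Λ ≃ₗ[ℚ] Λ)} (hl : ∀ g ∈ l, g ∈ S.SRef) :
    l.prod ∈ S.Wgrp := by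
  refine Subgroup.list_prod_mem _ fun g hg => ?_
  obtain ⟨γ, hγ, rfl⟩ := hl g hg
  exact S.rf_mem_W (S.simple_mem_R hγ)

/-- the exchange lemma -/
lemma exchange : ∀ (l : List (Λ ≃ₗ[ℚ] Λ)), (∀ g ∈ l, g ∈ S.SRef) →
    ∀ α ∈ S.Δ, l.prod α ∉ S.Rplus →
    ∃ l' : List (Λ ≃ₗ[ℚ] Λ), (∀ g ∈ l', g ∈ S.SRef) ∧ l'.length + 1 = l.length ∧
      l.prod * S.rf α = l'.prod := by
  intro l
  induction l with
  | nil =>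
    intro _ α hα h
    exact absurd (by simpa using S.simple_mem_Rplus hα) h
  | cons g t ih =>
    intro hl α hα hneg
    have hαR := S.simple_mem_R hα
    by_cases htα : t.prod α ∈ S.Rplus
    · obtain ⟨β, hβΔ, hgβ⟩ := hl g (List.mem_cons_self)
      have htβ : t.prod α = β := by
        by_contra hne
        refine hneg ?_
        rw [List.prod_cons, mul_app, hgβ]
        exact S.simple_refl_pos hβΔ htα hne
      have htW : t.prod ∈ S.Wgrp :=
        S.list_prod_mem_W (fun g' hg' => hl g' (List.mem_cons_of_mem g hg'))
      have hconj : S.rf β = t.prod * S.rf α * (t.prod)⁻¹ := by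
        rw [← htβ]
        exact S.rf_conj hαR htW
      refine ⟨t, fun g' hg' => hl g' (List.mem_cons_of_mem g hg'), by simp, ?_⟩
      rw [List.prod_cons, hgβ, hconj]
      have hss := S.rf_mul_self hαR
      calc t.prod * S.rf α * t.prod⁻¹ * (t.prod * S.rf α)
          = t.prod * S.rf α * (t.prod⁻¹ * (t.prod * S.rf α)) := by rw [mul_assoc]
        _ = t.prod * S.rf α * (t.prod⁻¹ * t.prod * S.rf α) := by rw [mul_assoc t.prod⁻¹]
        _ = t.prod * S.rf α * S.rf α := by rw [inv_mul_cancel, one_mul]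
        _ = t.prod * (S.rf α * S.rf α) := by rw [mul_assoc]
        _ = t.prod := by rw [hss, mul_one]
    · obtain ⟨l', hl', hlen, hprod⟩ := ih (fun g' hg' => hl g' (List.mem_cons_of_mem g hg'))
        α hα htα
      refine ⟨g :: l', ?_, by simp [← hlen], ?_⟩
      · intro g' hg'
        rcases List.mem_cons.1 hg' with h | h
        · exact h ▸ hl g (List.mem_cons_self)
        · exact hl' g' h
      · rw [List.prod_cons, List.prod_cons, mul_assoc, hprod]

lemma eq_one_of_pos_list : ∀ (n : ℕ), ∀ (l : List (Λ ≃ₗ[ℚ] Λ)), l.length ≤ n →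
    (∀ g ∈ l, g ∈ S.SRef) → (∀ β ∈ S.Rplus, l.prod β ∈ S.Rplus) → l.prod = 1 := by
  intro n
  induction n using Nat.strong_induction_on with
  | _ n ih =>
    intro l hlen hl hpos
    rcases l.eq_nil_or_concat with rfl | ⟨t, b, rfl⟩
    · rfl
    · obtain ⟨α, hαΔ, hbα⟩ := hl b (by simp)
      have hαp := S.simple_mem_Rplus hαΔ
      have hαR := S.simple_mem_R hαΔ
      have hprodeq : (t.concat b).prod = t.prod * S.rf α := by
        rw [List.concat_eq_append, List.prod_append, List.prod_cons, List.prod_nil,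
          mul_one, hbα]
      have hwα : (t.concat b).prod α ∈ S.Rplus := hpos α hαp
      have htα : t.prod α ∉ S.Rplus := by
        have h1 : (t.concat b).prod α = - (t.prod α) := by
          rw [hprodeq, mul_app, S.rf_root hαR, map_neg]
        intro hc
        rw [h1] at hwα
        exact S.neg_notin_Rplus hc hwα
      have htmem : ∀ g ∈ t, g ∈ S.SRef := fun g hg => hl g (by simp [hg])
      obtain ⟨l', hl', hlen', hprod'⟩ := S.exchange t htmem α hαΔ htα
      have hfinal : (t.concat b).prod = l'.prod := by rw [hprodeq, ← hprod']
      have hlenlt : l'.length < n := by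
        have : (t.concat b).length = t.length + 1 := by simp
        omega
      rw [hfinal]
      refine ih l'.length hlenlt l' le_rfl hl' ?_
      intro β hβ
      rw [← hfinal]
      exact hpos β hβ

lemma w_eq_one_of_pos {w : Λ ≃ₗ[ℚ] Λ} (hw : w ∈ S.Wgrp)
    (h : ∀ β ∈ S.Rplus, w β ∈ S.Rplus) : w = 1 := by
  rw [S.Wgrp_eq_closure_simples] at hw
  have hw' : w ∈ (Subgroup.closure S.SRef).toSubmonoid := hw
  rw [Subgroup.closure_toSubmonoid] at hw'
  obtain ⟨l, hl, rfl⟩ := Submonoid.exists_list_of_mem_closure hw'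
  refine S.eq_one_of_pos_list l.length l le_rfl ?_ h
  intro g hg
  rcases hl g hg with h' | h'
  · exact h'
  · obtain ⟨γ, hγ, hgγ⟩ := h'
    have : g = S.rf γ := by
      rw [← inv_inv g, show g⁻¹ = S.rf γ from hgγ, S.rf_inv (S.simple_mem_R hγ)]
    exact ⟨γ, hγ, this⟩

/-- triviality of the stabiliser of ρ -/
lemma stab_rho {w : Λ ≃ₗ[ℚ] Λ} (hw : w ∈ S.Wgrp) (h : w S.ρ = S.ρ) : w = 1 := by
  refine S.w_eq_one_of_pos hw ?_
  intro β hβ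
  have hβR := S.hposSub hβ
  have hwβR : w β ∈ S.R := S.w_mem_R hw hβR
  by_contra hc
  have hneg : -(w β) ∈ S.Rplus := S.neg_in_Rplus hwβR hc
  have h1 : S.Bb (w β) S.ρ = S.Bb β S.ρ := by
    nth_rewrite 1 [← h]
    exact S.Bb_inv hw β S.ρ
  have h2 : 0 < S.Bb (-(w β)) S.ρ := S.rho_pos hneg
  have h3 : 0 < S.Bb β S.ρ := S.rho_pos hβ
  rw [map_neg, LinearMap.neg_apply, h1] at h2
  linarith

/-- the Weyl denominator (product of half-root factors) -/
noncomputable def ff : AddMonoidAlgebra ℤ Λ := ∏ α ∈ S.Rplus, fac α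

/-- the positive representative of a root -/
noncomputable def posR (a : Λ) : Λ := if a ∈ S.Rplus then a else -a

lemma posR_pos {a : Λ} (h : a ∈ S.Rplus) : S.posR a = a := by rw [posR, if_pos h]

lemma posR_neg_pos {a : Λ} (h : a ∈ S.Rplus) : S.posR (-a) = a := by
  rw [posR, if_neg (S.neg_notin_Rplus h), neg_neg]

lemma posR_mem {a : Λ} (h : a ∈ S.R) : S.posR a ∈ S.Rplus := by
  rw [posR]
  split
  · assumption
  · exact S.neg_in_Rplus h (by assumption)

lemma posR_cases (a : Λ) : S.posR a = a ∨ S.posR a = -a := by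
  rw [posR]; split
  · exact Or.inl rfl
  · exact Or.inr rfl

lemma posR_inv_cancel {w : Λ ≃ₗ[ℚ] Λ} {a : Λ} (ha : a ∈ S.Rplus) :
    S.posR (w⁻¹ (S.posR (w a))) = a := by
  rcases S.posR_cases (w a) with h | h
  · rw [h, inv_app, S.posR_pos ha]
  · rw [h, map_neg, inv_app, S.posR_neg_pos ha]

/-- the sign of a transformation -/
noncomputable def sgn (w : Λ ≃ₗ[ℚ] Λ) : ℤ := (-1) ^ (S.invSet w).card

lemma sgn_mul_self (w : Λ ≃ₗ[ℚ] Λ) : S.sgn w * S.sgn w = 1 := by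
  rw [sgn, ← pow_add]
  exact Even.neg_one_pow ⟨(S.invSet w).card, rfl⟩

lemma sgn_ne_zero (w : Λ ≃ₗ[ℚ] Λ) : S.sgn w ≠ 0 := by
  intro h
  have := S.sgn_mul_self w
  rw [h, mul_zero] at this
  norm_num at this

/-- anti-invariance of the Weyl denominator -/
lemma Tm_ff {w : Λ ≃ₗ[ℚ] Λ} (hw : w ∈ S.Wgrp) : Tm w S.ff = S.sgn w • S.ff := by
  classical
  rw [ff, map_prod]
  rw [Finset.prod_congr rfl (fun α (_ : α ∈ S.Rplus) => Tm_fac w α)]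
  have h2 : ∀ α ∈ S.Rplus, fac (w α)
      = (if w α ∈ S.Rplus then (1 : AddMonoidAlgebra ℤ Λ) else -1) * fac (S.posR (w α)) := by
    intro α hα
    by_cases h : w α ∈ S.Rplus
    · rw [if_pos h, S.posR_pos h, one_mul]
    · rw [if_neg h, posR, if_neg h, fac_neg]
      ring
  rw [Finset.prod_congr rfl h2, Finset.prod_mul_distrib]
  have h3 : ∏ α ∈ S.Rplus, (if w α ∈ S.Rplus then (1 : AddMonoidAlgebra ℤ Λ) else -1)
      = ((S.sgn w : ℤ) : AddMonoidAlgebra ℤ Λ) := by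
    rw [Finset.prod_ite, Finset.prod_const, Finset.prod_const, one_pow, one_mul, sgn]
    have hfe : S.Rplus.filter (fun a => ¬ w a ∈ S.Rplus) = S.invSet w := by
      rw [invSet]
    rw [hfe]
    push_cast
    ring
  have h4 : ∏ α ∈ S.Rplus, fac (S.posR (w α)) = ∏ α ∈ S.Rplus, fac α := by
    refine Finset.prod_nbij' (fun a => S.posR (w a)) (fun a => S.posR (w⁻¹ a))
      ?_ ?_ ?_ ?_ ?_
    · intro a ha
      exact S.posR_mem (S.w_mem_R hw (S.hposSub ha))
    · intro a ha
      exact S.posR_mem (S.w_inv_mem_R hw (S.hposSub ha))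
    · intro a ha
      exact S.posR_inv_cancel ha
    · intro a ha
      have := S.posR_inv_cancel (w := w⁻¹) ha
      rwa [inv_inv] at this
    · intro a _
      rfl
  rw [h3, h4, ← zsmul_eq_mul]

lemma ff_eq : S.ff = ee S.ρ * ∏ α ∈ S.Rplus, (1 - ee (-α)) := by
  rw [ff]
  have h1 : ∀ α ∈ S.Rplus, fac α = ee (hf α) * (1 - ee (-α)) := by
    intro α _
    rw [fac, mul_sub, mul_one, ee_mul, hf_sub]
  rw [Finset.prod_congr rfl h1, Finset.prod_mul_distrib]
  congr 1
  show ∏ α ∈ S.Rplus, AddMonoidAlgebra.single (hf α) (1 : ℤ) = ee S.ρ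
  rw [AddMonoidAlgebra.prod_single, Finset.prod_const_one]
  have hsum : ∑ α ∈ S.Rplus, hf α = S.ρ := by
    show ∑ α ∈ S.Rplus, (2⁻¹ : ℚ) • α = S.ρ
    rw [← Finset.smul_sum, ← S.hρ, smul_smul]
    norm_num
  rw [hsum, ee]

/-- the expanded form of the Weyl denominator -/
noncomputable def ffExp : AddMonoidAlgebra ℤ Λ :=
  ∑ T ∈ S.Rplus.powerset, ((-1 : ℤ) ^ T.card) • ee (S.ρ - ∑ a ∈ T, a)

lemma ff_expand : S.ff = S.ffExp := by
  classical
  rw [ff_eq, ffExp]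
  have h1 : ∀ α ∈ S.Rplus, (1 : AddMonoidAlgebra ℤ Λ) - ee (-α) = (- ee (-α)) + 1 :=
    fun _ _ => by ring
  rw [Finset.prod_congr rfl h1, Finset.prod_add, Finset.mul_sum]
  refine Finset.sum_congr rfl fun T hT => ?_
  rw [Finset.prod_const_one, mul_one]
  have h2 : ∏ a ∈ T, (- ee (-a) : AddMonoidAlgebra ℤ Λ)
      = ((-1 : ℤ) ^ T.card) • ee (- ∑ a ∈ T, a) := by
    have hstep : ∀ a ∈ T, (- ee (-a) : AddMonoidAlgebra ℤ Λ) = (-1) * ee (-a) :=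
      fun _ _ => by ring
    rw [Finset.prod_congr rfl hstep, Finset.prod_mul_distrib, Finset.prod_const]
    have h3 : ∏ a ∈ T, ee (-a) = ee (∑ a ∈ T, -a) := by
      show ∏ a ∈ T, AddMonoidAlgebra.single (-a) (1:ℤ) = _
      rw [AddMonoidAlgebra.prod_single, Finset.prod_const_one, ee]
    rw [h3, ← Finset.sum_neg_distrib, zsmul_eq_mul]
    push_cast
    ring
  rw [h2, mul_smul_comm, ee_mul]
  have : S.ρ + - ∑ a ∈ T, a = S.ρ - ∑ a ∈ T, a := by abel
  rw [this]

lemma ff_coeff_rho : S.ff.coeff S.ρ = 1 := by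
  classical
  rw [ff_expand, ffExp, AddMonoidAlgebra.coeff_sum, Finsupp.finset_sum_apply]
  rw [Finset.sum_eq_single_of_mem ∅ (Finset.empty_mem_powerset _)]
  · rw [AddMonoidAlgebra.coeff_smul_apply, ee_apply, Finset.card_empty, Finset.sum_empty, sub_zero,
      if_pos rfl, pow_zero, one_smul]
  · intro T hT hTne
    rw [AddMonoidAlgebra.coeff_smul_apply, ee_apply, if_neg, smul_zero]
    intro heq
    have hσ0 : ∑ a ∈ T, a = 0 := sub_eq_self.1 heq
    exact S.sum_pos_ne_zero (Finset.mem_powerset.1 hT)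
      (Finset.nonempty_of_ne_empty hTne) hσ0

lemma ff_supp {l : Λ} (h : S.ff.coeff l ≠ 0) : ∃ T, T ⊆ S.Rplus ∧ l = S.ρ - ∑ a ∈ T, a := by
  classical
  by_contra hc
  push_neg at hc
  refine h ?_
  rw [ff_expand, ffExp, AddMonoidAlgebra.coeff_sum, Finsupp.finset_sum_apply]
  refine Finset.sum_eq_zero fun T hT => ?_
  rw [AddMonoidAlgebra.coeff_smul_apply, ee_apply, if_neg, smul_zero]
  exact fun heq => hc T (Finset.mem_powerset.1 hT) heq.symm

lemma ff_coeff_w {w : Λ ≃ₗ[ℚ] Λ} (hw : w ∈ S.Wgrp) (a : Λ) :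
    S.ff.coeff (w a) = S.sgn w * S.ff.coeff a := by
  have h2 : (Tm w S.ff).coeff (w a) = S.ff.coeff a := Tm_coeff w S.ff a
  rw [S.Tm_ff hw, AddMonoidAlgebra.coeff_smul_apply, smul_eq_mul] at h2
  have hs := S.sgn_mul_self w
  calc S.ff.coeff (w a) = (S.sgn w * S.sgn w) * S.ff.coeff (w a) := by rw [hs, one_mul]
    _ = S.sgn w * (S.sgn w * S.ff.coeff (w a)) := by ring
    _ = S.sgn w * S.ff.coeff a := by rw [h2]

lemma ff_regular {l : Λ} (h : S.ff.coeff l ≠ 0) {γ : Λ} (hγ : γ ∈ S.Rplus) :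
    S.coroot γ l ≠ 0 := by
  intro h0
  have hγR := S.hposSub hγ
  have hfix : S.rf γ l = l := by rw [S.rf_apply hγR, h0, zero_smul, sub_zero]
  have hsgn : S.sgn (S.rf γ) = -1 := Odd.neg_one_pow (S.rho_pairing hγ).2
  have hcw := S.ff_coeff_w (S.rf_mem_W hγR) l
  rw [hfix, hsgn] at hcw
  omega

lemma rho_simple_one {γ : Λ} (hγ : γ ∈ S.Δ) : S.coroot γ S.ρ = 1 := by
  classical
  have hγR := S.simple_mem_R hγ
  have hγp := S.simple_mem_Rplus hγ
  have h2ρ : 2 * S.coroot γ S.ρ = ∑ a ∈ S.Rplus, S.coroot γ a := by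
    rw [← map_sum, ← S.hρ, map_smul]
    simp [smul_eq_mul]
  have hsplit : S.coroot γ γ + ∑ a ∈ S.Rplus.erase γ, S.coroot γ a
      = ∑ a ∈ S.Rplus, S.coroot γ a := Finset.add_sum_erase _ _ hγp
  have hzero : ∑ a ∈ S.Rplus.erase γ, S.coroot γ a = 0 := by
    refine sum_invol_neg _ (fun a => S.rf γ a) _ ?_ ?_ ?_
    · intro x hx
      obtain ⟨hxne, hxp⟩ := Finset.mem_erase.1 hx
      refine Finset.mem_erase.2 ⟨?_, S.simple_refl_pos hγ hxp hxne⟩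
      intro hh
      have hxg : x = S.rf γ γ :=
        (S.rf_invol hγR x).symm.trans (congrArg (⇑(S.rf γ)) hh)
      rw [S.rf_root hγR] at hxg
      exact S.neg_notin_Rplus hγp (hxg ▸ hxp)
    · intro x hx
      exact S.rf_invol hγR x
    · intro x hx
      exact S.coroot_rf_neg hγR x
  rw [← hsplit, hzero, add_zero, S.hcr2 γ hγR] at h2ρ
  linarith

lemma dominant_eq_rho {μ : Λ} (hμ : S.ff.coeff μ ≠ 0)
    (hdom : ∀ α ∈ S.Rplus, 0 < S.coroot α μ) : μ = S.ρ := by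
  classical
  obtain ⟨T, hT, hμeq⟩ := S.ff_supp hμ
  have hge1 : ∀ γ ∈ S.Δ, 1 ≤ S.coroot γ μ := by
    intro γ hγ
    have hγR := S.simple_mem_R hγ
    have hint : ∃ m : ℤ, S.coroot γ μ = (m : ℚ) := by
      obtain ⟨k, hk, _⟩ := S.coroot_rho_int (S.simple_mem_Rplus hγ)
      set n : Λ → ℤ := fun a => if ha : a ∈ S.R then (S.hcrys γ hγR a ha).choose else 0
        with hn
      have hsum : ∑ a ∈ T, S.coroot γ a = ((∑ a ∈ T, n a : ℤ) : ℚ) := by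
        push_cast
        refine Finset.sum_congr rfl fun a ha => ?_
        have haR := S.hposSub (hT ha)
        rw [hn]
        simp only [dif_pos haR]
        exact (S.hcrys γ hγR a haR).choose_spec
      refine ⟨k - ∑ a ∈ T, n a, ?_⟩
      rw [hμeq, map_sub, map_sum, hk, hsum]
      push_cast
      ring
    obtain ⟨m, hm⟩ := hint
    have hm0 : 0 < m := by
      have := hdom γ (S.simple_mem_Rplus hγ)
      rw [hm] at this
      exact_mod_cast this
    rw [hm]
    exact_mod_cast hm0
  have hdom2 : ∀ α ∈ S.Rplus, 0 ≤ S.Bb (μ - S.ρ) α := by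
    intro α hα
    obtain ⟨c, hc⟩ := S.simple_decomp' hα
    rw [hc, map_sum]
    refine Finset.sum_nonneg fun γ hγ => ?_
    rw [map_smul, smul_eq_mul]
    refine mul_nonneg (by positivity) ?_
    have h1 := S.coroot_B (S.simple_mem_R hγ) μ
    have h2 := S.coroot_B (S.simple_mem_R hγ) S.ρ
    have h3 := S.rho_simple_one hγ
    have h4 := S.Bb_pos_root (S.simple_mem_R hγ)
    have h5 := hge1 γ hγ
    rw [map_sub, LinearMap.sub_apply]
    nlinarith
  have hσeq : (∑ a ∈ T, a) = -(μ - S.ρ) := by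
    rw [hμeq]; abel
  have hBσ : S.Bb (∑ a ∈ T, a) (∑ a ∈ T, a) ≤ 0 := by
    nth_rewrite 1 [hσeq]
    rw [map_neg, LinearMap.neg_apply, neg_nonpos, map_sum]
    exact Finset.sum_nonneg fun a ha => hdom2 a (hT ha)
  have hσV : (∑ a ∈ T, a) ∈ S.V :=
    Submodule.sum_mem _ fun a ha => S.root_mem_V (S.hposSub (hT ha))
  have hσ0 : (∑ a ∈ T, a) = 0 := S.Bb_def hσV (le_antisymm hBσ (S.Bb_self_nonneg _))
  rw [hμeq, hσ0, sub_zero]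

lemma main_sum : ∑ w ∈ S.WF, S.sgn w • ee (w S.ρ) = S.ff := by
  classical
  refine AddMonoidAlgebra.ext (Finsupp.ext fun l => ?_)
  rw [AddMonoidAlgebra.coeff_sum, Finsupp.finset_sum_apply]
  by_cases hex : ∃ w₀ ∈ S.WF, w₀ S.ρ = l
  · obtain ⟨w₀, hw₀, hl⟩ := hex
    rw [Finset.sum_eq_single_of_mem w₀ hw₀]
    · rw [AddMonoidAlgebra.coeff_smul_apply, ee_apply, hl, if_pos rfl, smul_eq_mul, mul_one]
      rw [← hl, S.ff_coeff_w (S.mem_WF.1 hw₀) S.ρ, S.ff_coeff_rho, mul_one]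
    · intro w hw hne
      rw [AddMonoidAlgebra.coeff_smul_apply, ee_apply, if_neg, smul_zero]
      intro heq
      have h1 : (w₀⁻¹ * w) S.ρ = S.ρ := by
        rw [mul_app, heq, ← hl, inv_app]
      have h2 : w₀⁻¹ * w = 1 :=
        S.stab_rho (S.Wgrp.mul_mem (S.Wgrp.inv_mem (S.mem_WF.1 hw₀)) (S.mem_WF.1 hw)) h1
      exact hne (by rwa [inv_mul_eq_one, eq_comm] at h2)
  · push_neg at hex
    rw [Finset.sum_eq_zero (fun w hw => by
      rw [AddMonoidAlgebra.coeff_smul_apply, ee_apply, if_neg (hex w hw), smul_zero])]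
    by_contra hne
    have hff : S.ff.coeff l ≠ 0 := fun h => hne h.symm
    obtain ⟨w₀, hw₀, hmax⟩ := S.WF.exists_max_image (fun w => S.Bb (w l) S.ρ)
      ⟨1, S.one_mem_WF⟩
    have hw₀W := S.mem_WF.1 hw₀
    have hffμ : S.ff.coeff (w₀ l) ≠ 0 := by
      rw [S.ff_coeff_w hw₀W l]
      exact mul_ne_zero (S.sgn_ne_zero w₀) hff
    have hdom : ∀ α ∈ S.Rplus, 0 < S.coroot α (w₀ l) := by
      intro α hα
      rcases lt_trichotomy (S.coroot α (w₀ l)) 0 with hlt | h0 | hgt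
      · exfalso
        have hαR := S.hposSub hα
        have hmem : S.rf α * w₀ ∈ S.WF :=
          S.mem_WF.2 (S.Wgrp.mul_mem (S.rf_mem_W hαR) hw₀W)
        have hle := hmax _ hmem
        rw [mul_app] at hle
        have hval : S.Bb (S.rf α (w₀ l)) S.ρ
            = S.Bb (w₀ l) S.ρ - S.coroot α (w₀ l) * S.Bb α S.ρ := by
          rw [S.rf_apply hαR, map_sub, LinearMap.sub_apply, map_smul,
            LinearMap.smul_apply, smul_eq_mul]
        have hαρ := S.rho_pos hα
        rw [hval] at hle
        nlinarith
      · exact absurd h0 (S.ff_regular hffμ hα)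
      · exact hgt
    have hμρ : w₀ l = S.ρ := S.dominant_eq_rho hffμ hdom
    refine absurd ?_ (hex w₀⁻¹ (S.mem_WF.2 (S.Wgrp.inv_mem hw₀W)))
    rw [← hμρ, inv_app]

theorem main_theorem :
    ∑ w ∈ S.WF, S.sgn w • ee (w S.ρ - S.ρ) = ∏ α ∈ S.Rplus, (1 - ee (-α)) := by
  have hcan : ∀ x y : AddMonoidAlgebra ℤ Λ, ee S.ρ * x = ee S.ρ * y → x = y := by
    intro x y h
    have h1 : ee (-S.ρ) * (ee S.ρ * x) = ee (-S.ρ) * (ee S.ρ * y) := by rw [h]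
    rwa [← mul_assoc, ← mul_assoc, ee_mul, neg_add_cancel, ee_zero, one_mul,
      one_mul] at h1
  apply hcan
  rw [← S.ff_eq, ← S.main_sum, Finset.mul_sum]
  refine Finset.sum_congr rfl fun w _ => ?_
  rw [mul_smul_comm, ee_mul]
  have hr : S.ρ + (w S.ρ - S.ρ) = w S.ρ := by abel
  rw [hr]

end Setup
end WeylDen

/-- the Weyl denominator identity.  `Λ` is the (rational span of the) weight
lattice, `R` a finite reduced crystallographic root system with positive system `Rplus`,
`coroot α` the pairing `⟨·, α^∨⟩`, `ρ` the half sum of the positive roots, `Wgrp` the Weyl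
group (generated by the reflections `s_α : v ↦ v − ⟨v,α^∨⟩α`), and `len` the length function
(number of positive roots made negative).  Then in the group algebra ℤ[Λ]:
`∑_{w∈W} (−1)^{ℓ(w)} e^{wρ−ρ} = ∏_{α∈R⁺} (1 − e^{−α})`. -/
theorem weyl_denominator_identity {Λ : Type*} [AddCommGroup Λ] [Module ℚ Λ]
    (R Rplus : Finset Λ) (coroot : Λ → (Λ →ₗ[ℚ] ℚ))
    -- root system axioms
    (hR0 : (0 : Λ) ∉ R)
    (hcr2 : ∀ α ∈ R, coroot α α = 2)
    (hcrys : ∀ α ∈ R, ∀ β ∈ R, ∃ n : ℤ, coroot α β = (n : ℚ))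
    (hrefl : ∀ α ∈ R, ∀ β ∈ R, β - coroot α β • α ∈ R)
    (hred : ∀ α ∈ R, ∀ c : ℚ, c • α ∈ R → c = 1 ∨ c = -1)
    -- positive system axioms
    (hposSub : Rplus ⊆ R)
    (hposU : ∀ α ∈ R, (α ∈ Rplus ↔ -α ∉ Rplus))
    (hposAdd : ∀ α ∈ Rplus, ∀ β ∈ Rplus, α + β ∈ R → α + β ∈ Rplus)
    -- ρ is the half sum of the positive roots
    (ρ : Λ) (hρ : (2 : ℚ) • ρ = ∑ α ∈ Rplus, α)
    -- the Weyl group, generated by the reflections attached to the roots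
    (Wgrp : Subgroup (Λ ≃ₗ[ℚ] Λ))
    (hW : Wgrp = Subgroup.closure
      {g : Λ ≃ₗ[ℚ] Λ | ∃ α ∈ R, ∀ v : Λ, g v = v - coroot α v • α})
    (hWfin : (Wgrp : Set (Λ ≃ₗ[ℚ] Λ)).Finite)
    -- the length function, counting inversions
    (len : (Λ ≃ₗ[ℚ] Λ) → ℕ)
    (hlen : ∀ w : Λ ≃ₗ[ℚ] Λ, len w = Set.ncard {α : Λ | α ∈ Rplus ∧ w α ∉ Rplus}) :
    ∑ᶠ w ∈ (Wgrp : Set (Λ ≃ₗ[ℚ] Λ)),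
        ((-1 : ℤ) ^ len w) •
          (AddMonoidAlgebra.single (w ρ - ρ) (1 : ℤ) : AddMonoidAlgebra ℤ Λ)
      = ∏ α ∈ Rplus, ((1 : AddMonoidAlgebra ℤ Λ) - AddMonoidAlgebra.single (-α) 1) := by
  classical
  set S : WeylDen.Setup Λ :=
    ⟨R, Rplus, coroot, ρ, Wgrp, hR0, hcr2, hcrys, hrefl, hred, hposSub, hposU,
      hposAdd, hρ, hW, hWfin⟩ with hS
  have hlen2 : ∀ w : Λ ≃ₗ[ℚ] Λ, ((-1 : ℤ) ^ len w) = S.sgn w := by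
    intro w
    rw [WeylDen.Setup.sgn, hlen w]
    congr 1
    have hset : {α : Λ | α ∈ Rplus ∧ w α ∉ Rplus} = ↑(S.invSet w) := by
      ext a
      simp [WeylDen.Setup.invSet, hS]
    rw [hset, Set.ncard_coe_finset]
  have hWF : (Wgrp : Set (Λ ≃ₗ[ℚ] Λ)) = ↑S.WF := (Set.Finite.coe_toFinset hWfin).symm
  rw [hWF, finsum_mem_coe_finset]
  have := S.main_theorem
  rw [Finset.sum_congr rfl (fun w _ => by rw [hlen2 w])]
  exact this
end

section
/- Let R be a finite irreducible root system with positive roots R⁺, ρ the half-sum of positive roots, α_0^∨ the highest coroot, and h = ⟨ρ, α_0^∨⟩ + 1 the Coxeter number. Let p ≥ 2(h−1) and let ν be a weight of the form ν = pρ − γ with γ ∈ ℕR⁺. Write ν = ν^0 + pν^1 with ν^0 ∈ Λ_1 = {μ : 0 ≤ ⟨μ, α^∨⟩ < p ∀α simple}. Then ⟨ν^1 + ρ, α_0^∨⟩ ≤ 2(h−1) ≤ p. -/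
/-- Let R be a finite irreducible root system, with weights written in
coordinates `⟨λ, α_i^∨⟩` with respect to the fundamental weight basis (so `Λ = ι → ℤ`),
`ρ` the half-sum of positive roots (all coordinates 1), `α₀^∨` the highest coroot with
pairing `f λ = ∑ i c i * λ i` (where `c i = ⟨ω_i, α₀^∨⟩ ≥ 0`), and Coxeter number
`h = ⟨ρ, α₀^∨⟩ + 1`.  Let `p ≥ 2(h−1)` and `ν = pρ − γ` with `γ ∈ ℕR⁺`; write
`ν = ν⁰ + pν¹` with `ν⁰ ∈ Λ₁`.  Then `⟨ν¹ + ρ, α₀^∨⟩ ≤ 2(h−1) ≤ p`. -/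
theorem pairing_bound {ι : Type*} [Fintype ι]
    (c : ι → ℤ) (hc : ∀ i, 0 ≤ c i)
    (f : (ι → ℤ) → ℤ) (hf : ∀ v, f v = ∑ i, c i * v i)
    (ρ : ι → ℤ) (hρ : ∀ i, ρ i = 1)
    (h : ℤ) (hcox : h = f ρ + 1)
    (p : ℕ) (hp : 2 * (h - 1) ≤ (p : ℤ))
    (Rplus : Finset (ι → ℤ)) (hRplus : ∀ α ∈ Rplus, 0 ≤ f α)
    (γ : ι → ℤ) (g : (ι → ℤ) → ℕ) (hγ : γ = ∑ α ∈ Rplus, g α • α)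
    (ν : ι → ℤ) (hν : ν = (p : ℤ) • ρ - γ)
    (ν0 ν1 : ι → ℤ) (hdec : ν = ν0 + (p : ℤ) • ν1)
    (hν0 : ∀ i, 0 ≤ ν0 i ∧ ν0 i < (p : ℤ)) :
    f (ν1 + ρ) ≤ 2 * (h - 1) ∧ 2 * (h - 1) ≤ (p : ℤ) := by
  refine ⟨?_, hp⟩
  have hfρ : f ρ = h - 1 := by omega
  rcases isEmpty_or_nonempty ι with hι | hι
  · simp only [hf, Finset.univ_eq_empty, Finset.sum_empty] at hfρ ⊢
    omega
  -- p > 0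
  have hp0 : 0 < p := by
    rcases Nat.eq_zero_or_pos p with h0 | h0
    · obtain ⟨i⟩ := hι
      have := hν0 i
      omega
    · exact h0
  -- f γ ≥ 0
  have hγ0 : 0 ≤ f γ := by
    have hh : f γ = ∑ α ∈ Rplus, (g α : ℤ) * f α := by
      simp only [hf, hγ, Finset.sum_apply, Pi.smul_apply, nsmul_eq_mul, Pi.mul_apply, Finset.mul_sum]
      rw [Finset.sum_comm]
      exact Finset.sum_congr rfl fun α _ => Finset.sum_congr rfl fun i _ => by simp [Pi.natCast_apply]; ring
    rw [hh]
    exact Finset.sum_nonneg fun α hα => mul_nonneg (by positivity) (hRplus α hα)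
  -- f ν0 ≥ 0
  have hν00 : 0 ≤ f ν0 := by
    rw [hf]
    exact Finset.sum_nonneg fun i _ => mul_nonneg (hc i) (hν0 i).1
  -- f ν = p * f ρ - f γ
  have hfν : f ν = (p : ℤ) * (h - 1) - f γ := by
    have hh : f ν = (p : ℤ) * f ρ - f γ := by
      simp only [hν, hf, Pi.sub_apply, Pi.smul_apply, smul_eq_mul, mul_sub]
      rw [Finset.sum_sub_distrib, Finset.mul_sum]
      congr 1
      exact Finset.sum_congr rfl fun i _ => by ring
    rw [hh, hfρ]
  -- f ν = f ν0 + p * f ν1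
  have hfν' : f ν = f ν0 + (p : ℤ) * f ν1 := by
    simp only [hf, hdec, Pi.add_apply, Pi.smul_apply, smul_eq_mul, Finset.mul_sum,
      ← Finset.sum_add_distrib]
    refine Finset.sum_congr rfl fun i _ => by ring
  have key : (p : ℤ) * f ν1 ≤ (p : ℤ) * (h - 1) := by omega
  have hν1 : f ν1 ≤ h - 1 := le_of_mul_le_mul_left key (by exact_mod_cast hp0)
  have : f (ν1 + ρ) = f ν1 + f ρ := by
    simp only [hf, Pi.add_apply, mul_add, Finset.sum_add_distrib]
  omega
end
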